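/- arXiv:2505.16585 — 3 statements merged into one kernel-verified Lean document; each statement's English description precedes it below -/
import Mathlib

section
/- Define the area of a string s of lattice loops as area(s) = min{ ∑_p J(p) : J : P_Λ → ℕ, (s,J) balanced }, where (s,J) is balanced if every oriented lattice edge e occurs in (s,J) the same number of times as e^{-1}. If s' is obtained from s by a splitting or a merger at an edge, then area(s') = area(s). If s' is a deformation of s by a plaquette, then area(s) ≤ area(s') + 1. -/
open Finset

/-- Number of occurrences of the oriented edge e among the loops of the
string s. -/
def occCount {E : Type*} [DecidableEq E] (s : List (List E)) (e : E) : ℕ :=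
  (s.map (fun ℓ => ℓ.count e)).sum

/-- Number of occurrences of the oriented edge e in the pair (s, J): the
occurrences in the loops of s, plus J(p) occurrences for each appearance of e
in the boundary of the plaquette p. -/
def nOcc {E P : Type*} [DecidableEq E] [Fintype P] (bd : P → List E)
    (s : List (List E)) (J : P → ℕ) (e : E) : ℕ :=
  occCount s e + ∑ p, J p * (bd p).count e

/-- (s, J) is balanced if every oriented edge occurs as often as its
inverse. -/
def BalancedPair {E P : Type*} [DecidableEq E] [Fintype P] (inv : E → E)
    (bd : P → List E) (s : List (List E)) (J : P → ℕ) : Prop :=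
  ∀ e, nOcc bd s J e = nOcc bd s J (inv e)

/-- The area of a string: the minimal total plaquette count ∑_p J(p) over
all plaquette counts J making (s, J) balanced. -/
noncomputable def area {E P : Type*} [DecidableEq E] [Fintype P] (inv : E → E)
    (bd : P → List E) (s : List (List E)) : ℕ :=
  sInf {n | ∃ J : P → ℕ, BalancedPair inv bd s J ∧ ∑ p, J p = n}

/-- Splittings and mergers preserve the edge multiset of a string and hence
the area: if s₁ has the same oriented-edge occurrence counts as s then
area(s₁) = area(s).  If s₂ is a deformation of s by the plaquette p (so the
edges of s₂ are those of s together with the boundary of p, up to erasure of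
backtrack pairs D with D(e) = D(e⁻¹)), then area(s) ≤ area(s₂) + 1, where
pinv is the oppositely oriented plaquette of p. -/
theorem stmt_14 {E P : Type*} [DecidableEq E] [Fintype P]
    (inv : E → E) (hinv : ∀ e, inv (inv e) = e)
    (bd : P → List E) (s s₁ s₂ : List (List E))
    (h₁ : ∀ e, occCount s₁ e = occCount s e)
    (p pinv : P) (hpinv : ∀ e, (bd pinv).count e = (bd p).count (inv e))
    (D : E → ℕ) (hD : ∀ e, D e = D (inv e))
    (h₂ : ∀ e, occCount s₂ e + D e = occCount s e + (bd p).count e) :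
    area inv bd s₁ = area inv bd s ∧ area inv bd s ≤ area inv bd s₂ + 1 := by
  classical
  have hsum : ∀ (q : P) (J : P → ℕ) e,
      (∑ r, (J r + if r = q then 1 else 0) * (bd r).count e)
        = (∑ r, J r * (bd r).count e) + (bd q).count e := by
    intro q J e
    simp [add_mul, Finset.sum_add_distrib, ite_mul, Finset.sum_ite_eq']
  have htot : ∀ (q : P) (J : P → ℕ),
      (∑ r, (J r + if r = q then 1 else 0)) = (∑ r, J r) + 1 := by
    intro q J
    simp [Finset.sum_add_distrib, Finset.sum_ite_eq']
  -- balanced for s₂ gives balanced for s with one more plaquette (p)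
  have key₁ : ∀ J : P → ℕ, BalancedPair inv bd s₂ J →
      BalancedPair inv bd s (fun r => J r + if r = p then 1 else 0) := by
    intro J hJ e
    have aux : ∀ f, nOcc bd s (fun r => J r + if r = p then 1 else 0) f
        = nOcc bd s₂ J f + D f := by
      intro f
      have := h₂ f
      simp only [nOcc, hsum]
      omega
    rw [aux, aux, ← hD e, hJ e]
  -- balanced for s gives balanced for s₂ with one more plaquette (pinv)
  have key₂ : ∀ J : P → ℕ, BalancedPair inv bd s J →
      BalancedPair inv bd s₂ (fun r => J r + if r = pinv then 1 else 0) := by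
    intro J hJ e
    have aux : ∀ f, nOcc bd s₂ (fun r => J r + if r = pinv then 1 else 0) f + D f
        = nOcc bd s J f + (bd p).count f + (bd p).count (inv f) := by
      intro f
      have := h₂ f
      simp only [nOcc, hsum, hpinv]
      omega
    have h1 := aux e
    have h2 := aux (inv e)
    rw [hinv e] at h2
    have hd := hD e
    rw [hJ e] at h1
    omega
  constructor
  · unfold area
    congr 1
    ext n
    simp only [Set.mem_setOf_eq]
    constructor <;> rintro ⟨J, hJ, hsumJ⟩ <;>
      refine ⟨J, fun e => ?_, hsumJ⟩ <;>
      · have := hJ e; simp only [nOcc, h₁] at this ⊢; omega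
  · by_cases hB : {n | ∃ J : P → ℕ, BalancedPair inv bd s₂ J ∧ ∑ q, J q = n}.Nonempty
    · have hmem := Nat.sInf_mem hB
      obtain ⟨J, hJ, hsumJ⟩ := hmem
      have : area inv bd s₂ + 1 ∈
          {n | ∃ J : P → ℕ, BalancedPair inv bd s J ∧ ∑ q, J q = n} := by
        exact ⟨_, key₁ J hJ, by rw [htot p J, hsumJ]; rfl⟩
      exact Nat.sInf_le this
    · -- B empty ⇒ A empty ⇒ area s = 0
      have hA : {n | ∃ J : P → ℕ, BalancedPair inv bd s J ∧ ∑ q, J q = n} = ∅ := by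
        by_contra h
        obtain ⟨n, J, hJ, -⟩ := Set.nonempty_iff_ne_empty.mpr h
        exact hB ⟨_, _, key₂ J hJ, rfl⟩
      simp [area, hA]
end

section
/- Suppose (s, J) is balanced and let S be the union of all connected components of supp(J) that contain a plaquette sharing an edge with some loop of s. Then |S| ≥ area̲(s), where area̲(s) = min{ |supp(J')| : (s, J') balanced } is the modified area of s. -/
open Finset

/-- Two plaquettes are adjacent if they share a lattice edge (up to
orientation). -/
def AdjPlaq {E P : Type*} (inv : E → E) (bd : P → List E) (p q : P) : Prop :=
  ∃ e, (e ∈ bd p ∨ inv e ∈ bd p) ∧ (e ∈ bd q ∨ inv e ∈ bd q)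

/-- A plaquette touches the string s if its boundary shares a lattice edge
(up to orientation) with some loop of s. -/
def TouchesString {E P : Type*} (inv : E → E) (bd : P → List E)
    (s : List (List E)) (q : P) : Prop :=
  ∃ e, (e ∈ bd q ∨ inv e ∈ bd q) ∧ ∃ ℓ ∈ s, e ∈ ℓ

/-- Modified area: the minimal support size |supp(J')| over plaquette counts
J' making (s, J') balanced. -/
noncomputable def marea {E P : Type*} [DecidableEq E] [Fintype P] (inv : E → E)
    (bd : P → List E) (s : List (List E)) : ℕ :=
  sInf {n | ∃ J' : P → ℕ, BalancedPair inv bd s J' ∧ {p | J' p ≠ 0}.ncard = n}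

/-- If (s, J) is balanced and S is the union of connected components of
supp(J) that neighbor some loop of s (connectivity through supp(J), via
plaquettes sharing an edge), then |S| ≥ area̲(s). -/
theorem stmt_17 {E P : Type*} [DecidableEq E] [Fintype P]
    (inv : E → E) (hinv : ∀ e, inv (inv e) = e)
    (bd : P → List E) (s : List (List E)) (J : P → ℕ)
    (hJ : BalancedPair inv bd s J) :
    marea inv bd s ≤
      ({p | J p ≠ 0 ∧ ∃ q, Relation.ReflTransGen
          (fun x y => J x ≠ 0 ∧ J y ≠ 0 ∧ AdjPlaq inv bd x y) p q ∧
          J q ≠ 0 ∧ TouchesString inv bd s q} : Set P).ncard := by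
  classical
  set S : Set P := {p | J p ≠ 0 ∧ ∃ q, Relation.ReflTransGen
      (fun x y => J x ≠ 0 ∧ J y ≠ 0 ∧ AdjPlaq inv bd x y) p q ∧
      J q ≠ 0 ∧ TouchesString inv bd s q} with hSdef
  set J₁ : P → ℕ := fun p => if p ∈ S then J p else 0 with hJ₁
  have hsupp : {p | J₁ p ≠ 0} = S := by
    ext p
    simp only [Set.mem_setOf_eq, hJ₁]
    by_cases h : p ∈ S
    · simp only [if_pos h]
      exact ⟨fun _ => h, fun _ => h.1⟩
    · simp [h]
  have hbal : BalancedPair inv bd s J₁ := by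
    intro e
    by_cases hcase : ∃ p, p ∉ S ∧ J p ≠ 0 ∧ (e ∈ bd p ∨ inv e ∈ bd p)
    · obtain ⟨p₀, hp₀S, hp₀J, hp₀e⟩ := hcase
      have key : ∀ f, (f ∈ bd p₀ ∨ inv f ∈ bd p₀) → nOcc bd s J₁ f = 0 := by
        intro f hf
        have h1 : occCount s f = 0 := by
          unfold occCount
          rw [List.sum_eq_zero]
          intro x hx
          simp only [List.mem_map] at hx
          obtain ⟨ℓ, hℓ, rfl⟩ := hx
          rw [List.count_eq_zero]
          intro hfℓ
          exact hp₀S ⟨hp₀J, p₀, Relation.ReflTransGen.refl, hp₀J, f, hf, ℓ, hℓ, hfℓ⟩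
        have h2 : ∑ p, J₁ p * (bd p).count f = 0 := by
          apply Finset.sum_eq_zero
          intro p _
          by_cases hpS : p ∈ S
          · obtain ⟨hpJ, q, hpq, hq⟩ := hpS
            have : f ∉ bd p := by
              intro hfp
              exact hp₀S ⟨hp₀J, q,
                Relation.ReflTransGen.head ⟨hp₀J, hpJ, f, hf, Or.inl hfp⟩ hpq, hq⟩
            rw [List.count_eq_zero_of_not_mem this, mul_zero]
          · simp [hJ₁, hpS]
        unfold nOcc
        omega
      have he : nOcc bd s J₁ e = 0 := key e hp₀e
      have he' : nOcc bd s J₁ (inv e) = 0 := by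
        apply key (inv e)
        rw [hinv]
        exact hp₀e.symm
      rw [he, he']
    · push_neg at hcase
      have hsum : ∀ f, (∀ p, p ∉ S → J p ≠ 0 → f ∉ bd p) →
          ∑ p, J₁ p * (bd p).count f = ∑ p, J p * (bd p).count f := by
        intro f hfree
        apply Finset.sum_congr rfl
        intro p _
        by_cases hpS : p ∈ S
        · simp [hJ₁, hpS]
        · by_cases hpJ : J p = 0
          · simp [hJ₁, hpS, hpJ]
          · rw [List.count_eq_zero_of_not_mem (hfree p hpS hpJ), mul_zero, mul_zero]
      have h1 : ∑ p, J₁ p * (bd p).count e = ∑ p, J p * (bd p).count e :=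
        hsum e (fun p hpS hpJ => (hcase p hpS hpJ).1)
      have h2 : ∑ p, J₁ p * (bd p).count (inv e) = ∑ p, J p * (bd p).count (inv e) :=
        hsum (inv e) (fun p hpS hpJ => (hcase p hpS hpJ).2)
      have h3 := hJ e
      unfold nOcc at h3 ⊢
      rw [h1, h2]
      exact h3
  have hmem : S.ncard ∈ {n | ∃ J' : P → ℕ, BalancedPair inv bd s J' ∧
      {p | J' p ≠ 0}.ncard = n} := ⟨J₁, hbal, by rw [hsupp]⟩
  exact Nat.sInf_le hmem
end

section
/- Let ℓ be a fixed loop in a finite lattice, and say a set C of plaquettes is ℓ-connected if every connected component of C contains a plaquette sharing an edge with ℓ. Assume: (i) each edge of ℓ is contained in at most 2(d-1) plaquettes, and (ii) for any fixed plaquette, the number of connected plaquette sets of size n containing it is at most 10^{dn}. Then for every M ≥ 0, the number of ℓ-connected plaquette sets C with |C| ≤ M is at most e^{2d|ℓ|}·50^{dM}. -/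
/-!
Every component of an ℓ-connected set `C` meets the set `A` of plaquettes touching ℓ, and
`|A| ≤ 2(d-1)|ℓ|` by (i). Recording each component at its least element of `A` encodes `C`
injectively as a family `(g a)_{a ∈ A}`, each `g a` empty or a connected set containing `a`, of
total size at most `M`. Giving such a family the weight `c ^ (M - ∑ |g a|) ≥ 1` with
`c = 2·10^d` (Rankin's trick), the total weight factorises, and by (ii) each factor is at most
`∑ₙ 10^{dn} c^{-n} ≤ 2`. Hence there are at most `c^M · 2^|A| ≤ 50^{dM} e^{2d|ℓ|}` such sets.
-/

/-- A finite set C of plaquettes is connected (w.r.t. the adjacency Adj) if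
any two of its elements are joined by a path inside C. -/
def ConnectedIn {P : Type*} (Adj : P → P → Prop) (C : Finset P) : Prop :=
  ∀ p ∈ C, ∀ q ∈ C,
    Relation.ReflTransGen (fun a b => a ∈ C ∧ b ∈ C ∧ Adj a b) p q

/-- A plaquette touches the loop ℓ if it contains one of ℓ's edges. -/
def TouchesLoop {P E : Type*} (memE : P → E → Prop) (ledges : Finset E)
    (p : P) : Prop :=
  ∃ e ∈ ledges, memE p e

/-- C is ℓ-connected: every connected component of C contains a plaquette
sharing an edge with ℓ, i.e. every p ∈ C is joined inside C to some q ∈ C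
touching ℓ. -/
def LConnected {P E : Type*} (Adj : P → P → Prop) (memE : P → E → Prop)
    (ledges : Finset E) (C : Finset P) : Prop :=
  ∀ p ∈ C, ∃ q ∈ C,
    Relation.ReflTransGen (fun a b => a ∈ C ∧ b ∈ C ∧ Adj a b) p q ∧
    TouchesLoop memE ledges q

open Finset

section Components

variable {P : Type*} {Adj : P → P → Prop} {C : Finset P} {a b : P}

def ReachIn (Adj : P → P → Prop) (C : Finset P) : P → P → Prop :=
  Relation.ReflTransGen (fun x y => x ∈ C ∧ y ∈ C ∧ Adj x y)

/-- The connected component of `a` in `C` (empty when `a ∉ C`). -/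
noncomputable def componentIn (Adj : P → P → Prop) (C : Finset P) (a : P) : Finset P :=
  open Classical in C.filter (ReachIn Adj C a)

lemma mem_componentIn : b ∈ componentIn Adj C a ↔ b ∈ C ∧ ReachIn Adj C a b := by
  classical exact mem_filter

lemma componentIn_subset : componentIn Adj C a ⊆ C := fun _ hb => (mem_componentIn.1 hb).1

lemma self_mem_componentIn (ha : a ∈ C) : a ∈ componentIn Adj C a :=
  mem_componentIn.2 ⟨ha, .refl⟩

lemma ReachIn.symm (hAdj : ∀ p q, Adj p q → Adj q p) (h : ReachIn Adj C a b) :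
    ReachIn Adj C b a := by
  induction h with
  | refl => exact .refl
  | tail _ hxy ih => exact .head ⟨hxy.2.1, hxy.1, hAdj _ _ hxy.2.2⟩ ih

lemma componentIn_eq_of_mem (hAdj : ∀ p q, Adj p q → Adj q p) (hb : b ∈ componentIn Adj C a) :
    componentIn Adj C b = componentIn Adj C a := by
  obtain ⟨-, hab⟩ := mem_componentIn.1 hb
  ext x
  simp only [mem_componentIn, and_congr_right_iff]
  exact fun _ => ⟨hab.trans, (hab.symm hAdj).trans⟩

lemma componentIn_eq_of_not_disjoint (hAdj : ∀ p q, Adj p q → Adj q p) {a' : P}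
    (h : ¬ Disjoint (componentIn Adj C a) (componentIn Adj C a')) :
    componentIn Adj C a = componentIn Adj C a' := by
  obtain ⟨x, hx, hx'⟩ := not_disjoint_iff.1 h
  rw [← componentIn_eq_of_mem hAdj hx, componentIn_eq_of_mem hAdj hx']

lemma ReachIn.reachIn_componentIn {p q : P} (hap : ReachIn Adj C a p)
    (hpq : ReachIn Adj C p q) : ReachIn Adj (componentIn Adj C a) p q := by
  induction hpq with
  | refl => exact .refl
  | @tail x y hpx hxy ih =>
    have hax : ReachIn Adj C a x := hap.trans hpx
    exact ih.tail ⟨mem_componentIn.2 ⟨hxy.1, hax⟩,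
      mem_componentIn.2 ⟨hxy.2.1, hax.tail hxy⟩, hxy.2.2⟩

lemma connectedIn_componentIn (hAdj : ∀ p q, Adj p q → Adj q p) :
    ConnectedIn Adj (componentIn Adj C a) := by
  intro p hp q hq
  obtain ⟨-, hap⟩ := mem_componentIn.1 hp
  obtain ⟨-, haq⟩ := mem_componentIn.1 hq
  exact hap.reachIn_componentIn ((hap.symm hAdj).trans haq)

end Components

section AnchoredComponents

variable {P : Type*} [LinearOrder P] {Adj : P → P → Prop} {A C : Finset P} {a a' : P}

/-- Every component of `C` meeting `A` is recorded exactly once, at its least element of `A`. -/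
noncomputable def anchoredComponent (Adj : P → P → Prop) (A C : Finset P) (a : P) : Finset P :=
  open Classical in
  if IsLeast (↑(componentIn Adj C a ∩ A) : Set P) a then componentIn Adj C a else ∅

lemma anchoredComponent_subset : anchoredComponent Adj A C a ⊆ C := by
  unfold anchoredComponent
  split_ifs
  exacts [componentIn_subset, empty_subset C]

lemma anchoredComponent_of_isLeast (h : IsLeast (↑(componentIn Adj C a ∩ A) : Set P) a) :
    anchoredComponent Adj A C a = componentIn Adj C a :=
  if_pos h

lemma anchoredComponent_eq_empty_or :
    anchoredComponent Adj A C a = ∅ ∨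
      IsLeast (↑(componentIn Adj C a ∩ A) : Set P) a ∧
        anchoredComponent Adj A C a = componentIn Adj C a := by
  unfold anchoredComponent
  split_ifs with h
  exacts [.inr ⟨h, rfl⟩, .inl rfl]

lemma anchoredComponent_eq_empty_or_connectedIn (hAdj : ∀ p q, Adj p q → Adj q p) :
    anchoredComponent Adj A C a = ∅ ∨
      a ∈ anchoredComponent Adj A C a ∧ ConnectedIn Adj (anchoredComponent Adj A C a) := by
  refine anchoredComponent_eq_empty_or.imp_right fun ⟨hleast, heq⟩ => ?_
  rw [heq]
  exact ⟨(mem_inter.1 hleast.1).1, connectedIn_componentIn hAdj⟩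

lemma disjoint_anchoredComponent (hAdj : ∀ p q, Adj p q → Adj q p) (hne : a ≠ a') :
    Disjoint (anchoredComponent Adj A C a) (anchoredComponent Adj A C a') := by
  rcases anchoredComponent_eq_empty_or (Adj := Adj) (A := A) (C := C) (a := a) with h | ⟨ha, h⟩
  · simp [h]
  rcases anchoredComponent_eq_empty_or (Adj := Adj) (A := A) (C := C) (a := a') with h' | ⟨ha', h'⟩
  · simp [h']
  rw [h, h']
  by_contra hdis
  rw [componentIn_eq_of_not_disjoint hAdj hdis] at ha
  exact hne (ha.unique ha')

lemma sum_card_anchoredComponent_le (hAdj : ∀ p q, Adj p q → Adj q p) (s : Finset P) :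
    ∑ a ∈ s, #(anchoredComponent Adj A C a) ≤ #C := by
  classical
  rw [← card_biUnion fun a _ a' _ hne => disjoint_anchoredComponent hAdj hne]
  exact card_le_card (biUnion_subset.2 fun _ _ => anchoredComponent_subset)

lemma biUnion_anchoredComponent (hAdj : ∀ p q, Adj p q → Adj q p)
    (hC : ∀ p ∈ C, (componentIn Adj C p ∩ A).Nonempty) :
    A.biUnion (anchoredComponent Adj A C) = C := by
  refine Subset.antisymm (biUnion_subset.2 fun _ _ => anchoredComponent_subset) fun p hp => ?_
  let a := (componentIn Adj C p ∩ A).min' (hC p hp)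
  have hK : a ∈ componentIn Adj C p ∩ A := min'_mem _ _
  have hcomp : componentIn Adj C a = componentIn Adj C p :=
    componentIn_eq_of_mem hAdj (mem_inter.1 hK).1
  have hleast : IsLeast (↑(componentIn Adj C a ∩ A) : Set P) a := by
    rw [hcomp]
    exact isLeast_min' _ _
  refine mem_biUnion.2 ⟨a, (mem_inter.1 hK).2, ?_⟩
  rw [anchoredComponent_of_isLeast hleast, hcomp]
  exact self_mem_componentIn hp

end AnchoredComponents

section Counting

/-- Rankin's trick: every admissible tuple carries weight `c ^ (M - ∑ w) ≥ 1`, and the total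
weight of all tuples factorises over the coordinates. -/
lemma card_filter_piFinset_sum_le {ι α : Type*} [Fintype ι] [DecidableEq ι]
    (t : ι → Finset α) (w : α → ℕ) {c : ℝ} (hc : 1 ≤ c) (M : ℕ) :
    (#{g ∈ Fintype.piFinset t | ∑ i, w (g i) ≤ M} : ℝ) ≤ c ^ M * ∏ i, ∑ x ∈ t i, c⁻¹ ^ w x := by
  have hc0 : 0 < c := zero_lt_one.trans_le hc
  rw [prod_univ_sum, mul_sum, card_eq_sum_ones, Nat.cast_sum, Nat.cast_one]
  calc ∑ g ∈ Fintype.piFinset t with ∑ i, w (g i) ≤ M, (1 : ℝ)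
      ≤ ∑ g ∈ Fintype.piFinset t with ∑ i, w (g i) ≤ M, c ^ M * ∏ i, c⁻¹ ^ w (g i) := by
        refine sum_le_sum fun g hg => ?_
        rw [prod_pow_eq_pow_sum, inv_pow, ← div_eq_mul_inv, one_le_div (by positivity)]
        exact pow_le_pow_right₀ hc (mem_filter.1 hg).2
    _ ≤ ∑ g ∈ Fintype.piFinset t, c ^ M * ∏ i, c⁻¹ ^ w (g i) :=
        sum_le_sum_of_subset_of_nonneg (filter_subset _ _) fun _ _ _ => by positivity

lemma sum_inv_two_mul_pow_le_two {α : Type*} (V : Finset α) (w : α → ℕ) {b : ℝ} (hb : 0 < b)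
    (hV : ∀ n, (#{x ∈ V | w x = n} : ℝ) ≤ b ^ n) :
    ∑ x ∈ V, (2 * b)⁻¹ ^ w x ≤ 2 := by
  classical
  rw [sum_comp (fun n => (2 * b)⁻¹ ^ n) w]
  calc ∑ n ∈ V.image w, #{x ∈ V | w x = n} • (2 * b)⁻¹ ^ n
      ≤ ∑ n ∈ V.image w, (1 / 2 : ℝ) ^ n := by
        refine sum_le_sum fun n _ => ?_
        calc #{x ∈ V | w x = n} • (2 * b)⁻¹ ^ n ≤ b ^ n * (2 * b)⁻¹ ^ n := by
              rw [nsmul_eq_mul]; gcongr; exact hV n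
          _ = (1 / 2) ^ n := by rw [← mul_pow]; field_simp
    _ ≤ ∑ n ∈ range (V.sup w + 1), (1 / 2 : ℝ) ^ n := by
        refine sum_le_sum_of_subset_of_nonneg (fun n hn => ?_) fun _ _ _ => by positivity
        obtain ⟨x, hx, rfl⟩ := mem_image.1 hn
        exact mem_range.2 (Nat.lt_succ_of_le (le_sup hx))
    _ ≤ 2 := sum_geometric_two_le _

variable {P : Type*} [Fintype P] {Adj : P → P → Prop} {a : P}

/-- The possible values at `a` of an anchored component. -/
noncomputable def connectedSetsAt (Adj : P → P → Prop) (a : P) : Finset (Finset P) :=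
  open Classical in {v | v = ∅ ∨ a ∈ v ∧ ConnectedIn Adj v}

lemma mem_connectedSetsAt {v : Finset P} :
    v ∈ connectedSetsAt Adj a ↔ v = ∅ ∨ a ∈ v ∧ ConnectedIn Adj v := by
  classical simp [connectedSetsAt]

lemma card_filter_connectedSetsAt_le {B : ℕ}
    (hB : ∀ n, {C : Finset P | a ∈ C ∧ ConnectedIn Adj C ∧ C.card = n}.ncard ≤ B ^ n) (n : ℕ) :
    #{v ∈ connectedSetsAt Adj a | #v = n} ≤ B ^ n := by
  rcases Nat.eq_zero_or_pos n with rfl | hn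
  · refine (card_le_one.2 fun v hv v' hv' => ?_).trans (by simp)
    rw [card_eq_zero.1 (mem_filter.1 hv).2, card_eq_zero.1 (mem_filter.1 hv').2]
  · rw [← Set.ncard_coe_finset]
    refine (Set.ncard_le_ncard (fun v hv => ?_) (Set.toFinite _)).trans (hB n)
    obtain ⟨hvC, rfl⟩ := mem_filter.1 (mem_coe.1 hv)
    rcases mem_connectedSetsAt.1 hvC with rfl | ⟨hav, hconn⟩
    · exact absurd hn (by simp)
    · exact ⟨hav, hconn, rfl⟩

lemma card_anchoredFamilies_le [DecidableEq P] (A : Finset P) {B : ℕ} (hB0 : 0 < B)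
    (hB : ∀ a, ∀ n, {C : Finset P | a ∈ C ∧ ConnectedIn Adj C ∧ C.card = n}.ncard ≤ B ^ n)
    (M : ℕ) :
    (#{g ∈ Fintype.piFinset (fun a : A => connectedSetsAt Adj a) | ∑ a, #(g a) ≤ M} : ℝ)
      ≤ (2 * B) ^ M * 2 ^ #A := by
  have hB1 : (1 : ℝ) ≤ 2 * B := by
    have : (1 : ℝ) ≤ B := by exact_mod_cast hB0
    linarith
  refine (card_filter_piFinset_sum_le _ _ hB1 M).trans ?_
  gcongr
  rw [← card_attach, ← prod_const, univ_eq_attach]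
  refine prod_le_prod (fun _ _ => by positivity) fun a _ =>
    sum_inv_two_mul_pow_le_two _ _ (by positivity) fun n => ?_
  exact_mod_cast card_filter_connectedSetsAt_le (hB a) n

end Counting

lemma card_filter_touchesLoop_le {P E : Type*} [Fintype P] (memE : P → E → Prop)
    (ledges : Finset E) [DecidablePred (TouchesLoop memE ledges)] {k : ℕ}
    (hk : ∀ e ∈ ledges, {p : P | memE p e}.ncard ≤ k) :
    #{p | TouchesLoop memE ledges p} ≤ k * #ledges := by
  classical
  calc #{p | TouchesLoop memE ledges p}
      ≤ #(ledges.biUnion fun e => {p | memE p e}) := card_le_card fun p hp => by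
        obtain ⟨e, he, hpe⟩ := (mem_filter.1 hp).2
        exact mem_biUnion.2 ⟨e, he, by simpa using hpe⟩
    _ ≤ ∑ e ∈ ledges, #{p | memE p e} := card_biUnion_le
    _ ≤ ∑ _e ∈ ledges, k := sum_le_sum fun e he => by
        simpa [← Set.ncard_coe_finset] using hk e he
    _ = k * #ledges := by rw [sum_const, smul_eq_mul, mul_comm]

lemma two_mul_ten_pow_pow_le {d : ℕ} (hd : 1 ≤ d) (M : ℕ) :
    ((2 : ℝ) * 10 ^ d) ^ M ≤ 50 ^ (d * M) := by
  rw [pow_mul]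
  gcongr
  calc (2 : ℝ) * 10 ^ d ≤ 5 ^ d * 10 ^ d := by
        gcongr; exact le_trans (by norm_num) (le_self_pow₀ (by norm_num) (by omega))
    _ = 50 ^ d := by rw [← mul_pow]; norm_num

lemma two_pow_le_exp (n : ℕ) : (2 : ℝ) ^ n ≤ Real.exp n := by
  rw [← Real.exp_one_pow]
  gcongr
  linarith [Real.add_one_le_exp (1 : ℝ)]

lemma LConnected.componentIn_inter_nonempty {P E : Type*} [Fintype P] [DecidableEq P]
    {Adj : P → P → Prop} {memE : P → E → Prop} {ledges : Finset E}
    [DecidablePred (TouchesLoop memE ledges)] {C : Finset P}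
    (hC : LConnected Adj memE ledges C) {p : P} (hp : p ∈ C) :
    (componentIn Adj C p ∩ ({q | TouchesLoop memE ledges q} : Finset P)).Nonempty := by
  obtain ⟨q, hqC, hpq, hq⟩ := hC p hp
  exact ⟨q, mem_inter.2 ⟨mem_componentIn.2 ⟨hqC, hpq⟩, by simpa using hq⟩⟩

/-- Counting ℓ-connected plaquette sets: if each edge of ℓ lies in at most
2(d-1) plaquettes, and for each fixed plaquette the number of connected
plaquette sets of size n containing it is at most 10^{dn}, then for every
M ≥ 0 the number of ℓ-connected plaquette sets of size at most M is at most
e^{2d|ℓ|}·50^{dM}. -/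
theorem stmt_18 {P E : Type*} [Fintype P] (d : ℕ) (hd : 2 ≤ d)
    (Adj : P → P → Prop) (hAdj : ∀ p q, Adj p q → Adj q p)
    (memE : P → E → Prop) (ledges : Finset E)
    (h1 : ∀ e ∈ ledges, ({p : P | memE p e}).ncard ≤ 2 * (d - 1))
    (h2 : ∀ (p₀ : P) (n : ℕ),
      ({C : Finset P | p₀ ∈ C ∧ ConnectedIn Adj C ∧ C.card = n}).ncard
        ≤ 10 ^ (d * n))
    (M : ℕ) :
    (({C : Finset P | LConnected Adj memE ledges C ∧ C.card ≤ M}).ncard : ℝ)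
      ≤ Real.exp (2 * d * ledges.card) * 50 ^ (d * M) := by
  let _ : LinearOrder P := LinearOrder.lift' _ (Fintype.equivFin P).injective
  classical
  let A : Finset P := {p | TouchesLoop memE ledges p}
  let S := {C : Finset P | LConnected Adj memE ledges C ∧ C.card ≤ M}
  let encode (C : Finset P) (a : A) : Finset P := anchoredComponent Adj A C a
  let F : Finset (A → Finset P) :=
    {g ∈ Fintype.piFinset (fun a : A => connectedSetsAt Adj a) | ∑ a, #(g a) ≤ M}
  have hmaps : Set.MapsTo encode S F := fun C hC => mem_filter.2
    ⟨Fintype.mem_piFinset.2 fun _ => mem_connectedSetsAt.2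
      (anchoredComponent_eq_empty_or_connectedIn hAdj),
      (sum_coe_sort A _).trans_le ((sum_card_anchoredComponent_le hAdj A).trans hC.2)⟩
  have hinj : Set.InjOn encode S := fun C hC C' hC' h => by
    rw [← biUnion_anchoredComponent hAdj fun p hp => hC.1.componentIn_inter_nonempty hp,
      ← biUnion_anchoredComponent hAdj fun p hp => hC'.1.componentIn_inter_nonempty hp]
    exact biUnion_congr rfl fun a ha => congrFun h ⟨a, ha⟩
  have hA : (#A : ℝ) ≤ 2 * d * #ledges := by
    have hA' : #A ≤ 2 * (d - 1) * #ledges := card_filter_touchesLoop_le memE ledges h1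
    exact_mod_cast hA'.trans (by gcongr; omega)
  calc (S.ncard : ℝ) = (encode '' S).ncard := by rw [hinj.ncard_image]
    _ ≤ #F := by
        rw [← Set.ncard_coe_finset]
        exact_mod_cast Set.ncard_le_ncard hmaps.image_subset (Set.toFinite _)
    _ ≤ ((2 : ℝ) * 10 ^ d) ^ M * 2 ^ #A := by
        exact_mod_cast card_anchoredFamilies_le A (by positivity)
          (fun a n => (h2 a n).trans_eq (pow_mul 10 d n)) M
    _ ≤ 50 ^ (d * M) * Real.exp (2 * d * #ledges) := by
        gcongr
        · exact two_mul_ten_pow_pow_le (by omega) M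
        · exact (two_pow_le_exp _).trans (Real.exp_le_exp.2 hA)
    _ = Real.exp (2 * d * ledges.card) * 50 ^ (d * M) := mul_comm _ _
end
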